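/- Let X be symmetric positive definite and J = X^{1/2} 𝕁_{2n} X^{1/2}. A J-symplectic matrix A is orthonormal with respect to the X-inner product (AᵀXA = I) if and only if (A⁺)ᵀ is orthonormal with respect to the X⁻¹-inner product ((A⁺)X⁻¹(A⁺)ᵀ = I). -/
import Mathlib


open Matrix

noncomputable section

def Js (k : ℕ) : Matrix (Fin k ⊕ Fin k) (Fin k ⊕ Fin k) ℝ :=
  Matrix.fromBlocks 0 1 (-1) 0

lemma Js_transpose (k : ℕ) : (Js k)ᵀ = -(Js k) := by
  simp [Js, Matrix.fromBlocks_transpose, Matrix.fromBlocks_neg]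

lemma Js_mul_Js (k : ℕ) : Js k * Js k = -1 := by
  have h1 : Js k * Js k = Matrix.fromBlocks (-1) 0 0 (-1) := by
    simp [Js, Matrix.fromBlocks_multiply]
  have h2 : (-1 : Matrix (Fin k ⊕ Fin k) (Fin k ⊕ Fin k) ℝ) =
      Matrix.fromBlocks (-1) 0 0 (-1) := by
    have h3 : (1 : Matrix (Fin k ⊕ Fin k) (Fin k ⊕ Fin k) ℝ) =
        Matrix.fromBlocks 1 0 0 1 := (Matrix.fromBlocks_one).symm
    rw [h3, Matrix.fromBlocks_neg, neg_zero]
  rw [h1, h2]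

/-- Let `X` be symmetric positive definite with positive square root `Xs`, and
`J = Xs 𝕁_{2n} Xs`. A `J`-symplectic matrix `A` is orthonormal w.r.t. the
`X`-inner product iff `(A⁺)ᵀ` is orthonormal w.r.t. the `X⁻¹`-inner product. -/
theorem symplectic_X_orthonormal_iff (n k : ℕ)
    (X Xs : Matrix (Fin n ⊕ Fin n) (Fin n ⊕ Fin n) ℝ)
    (hX : X.PosDef) (hXs_sym : Xsᵀ = Xs) (hXs : Xs * Xs = X) (hXsp : Xs.PosDef)
    (A : Matrix (Fin n ⊕ Fin n) (Fin k ⊕ Fin k) ℝ)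
    (hA : Aᵀ * (Xs * Js n * Xs) * A = Js k) :
    Aᵀ * X * A = 1 ↔
      ((Js k)ᵀ * Aᵀ * (Xs * Js n * Xs)) * X⁻¹ * ((Js k)ᵀ * Aᵀ * (Xs * Js n * Xs))ᵀ = 1 := by
  have hXsu : IsUnit Xs.det := hXsp.det_pos.ne'.isUnit
  have hXsinv : Xs * Xs⁻¹ = 1 := Matrix.mul_nonsing_inv _ hXsu
  have hXsinv' : Xs⁻¹ * Xs = 1 := Matrix.nonsing_inv_mul _ hXsu
  have hXinv : X⁻¹ = Xs⁻¹ * Xs⁻¹ := by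
    rw [← hXs, Matrix.mul_inv_rev]
  -- key: J * X⁻¹ * Jᵀ = X
  have hJXJ : (Xs * Js n * Xs) * X⁻¹ * (Xs * Js n * Xs)ᵀ = X := by
    have ht : (Xs * Js n * Xs)ᵀ = Xs * (-(Js n)) * Xs := by
      rw [Matrix.transpose_mul, Matrix.transpose_mul, hXs_sym, Js_transpose]
      noncomm_ring
    rw [ht, hXinv]
    calc Xs * Js n * Xs * (Xs⁻¹ * Xs⁻¹) * (Xs * -Js n * Xs)
        = Xs * Js n * (Xs * Xs⁻¹) * ((Xs⁻¹ * Xs) * -Js n * Xs) := by noncomm_ring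
      _ = Xs * (-(Js n * Js n)) * Xs := by rw [hXsinv, hXsinv']; noncomm_ring
      _ = X := by rw [Js_mul_Js, ← hXs]; noncomm_ring
  have hJJ : (Js k)ᵀ * Js k = 1 := by
    rw [Js_transpose, show -Js k * Js k = -(Js k * Js k) by noncomm_ring, Js_mul_Js]; simp
  have hJJ' : Js k * (Js k)ᵀ = 1 := by
    rw [Js_transpose, show Js k * -Js k = -(Js k * Js k) by noncomm_ring, Js_mul_Js]; simp
  have hmain : ((Js k)ᵀ * Aᵀ * (Xs * Js n * Xs)) * X⁻¹ * ((Js k)ᵀ * Aᵀ * (Xs * Js n * Xs))ᵀ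
      = (Js k)ᵀ * (Aᵀ * X * A) * Js k := by
    have ht : ((Js k)ᵀ * Aᵀ * (Xs * Js n * Xs))ᵀ
        = (Xs * Js n * Xs)ᵀ * (A * Js k) := by
      simp [Matrix.transpose_mul, Matrix.mul_assoc]
    rw [ht,
      show ((Js k)ᵀ * Aᵀ * (Xs * Js n * Xs)) * X⁻¹ * ((Xs * Js n * Xs)ᵀ * (A * Js k))
        = (Js k)ᵀ * (Aᵀ * ((Xs * Js n * Xs) * X⁻¹ * (Xs * Js n * Xs)ᵀ) * A) * Js k
        from by simp only [Matrix.mul_assoc], hJXJ]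
  rw [hmain]
  constructor
  · intro h; rw [h, Matrix.mul_one, hJJ]
  · intro h
    have h2 := congrArg (fun M => Js k * M * (Js k)ᵀ) h
    simp only [Matrix.mul_one] at h2
    rw [hJJ'] at h2
    calc Aᵀ * X * A = Js k * ((Js k)ᵀ * (Aᵀ * X * A) * Js k) * (Js k)ᵀ := by
          rw [show Js k * ((Js k)ᵀ * (Aᵀ * X * A) * Js k) * (Js k)ᵀ
            = (Js k * (Js k)ᵀ) * (Aᵀ * X * A) * (Js k * (Js k)ᵀ) from by
              simp only [Matrix.mul_assoc], hJJ']
          simp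
      _ = 1 := h2
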